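/- arXiv:1806.09101 — 8 statements merged into one kernel-verified Lean document; each statement's English description precedes it below -/
import Mathlib

section
/- Theorem 2.1 (sufficiency direction of the lumpability criterion): Let T be a column-stochastic N×N matrix and c : Fin N → Fin M a coarse-graining map. Assume T satisfies the lumpability condition with lumped matrix 𝒢, i.e. for all mesostates α, β and every y with c y = β, ∑_{x : c x = α} T x y = 𝒢 α β (the block column sums are independent of the representative y). Then 𝒢 is column-stochastic and for every probability vector p on Fin N, every n ≥ 1 and all mesostates α₀, …, αₙ, the lumped joint probability ∑_{x₀,…,xₙ : c x_k = α_k for all k} T xₙ x_{n−1} ⋯ T x₁ x₀ · p x₀ equals 𝒢 αₙ α_{n−1} ⋯ 𝒢 α₁ α₀ · (Λp) α₀; hence the lumped process is a homogeneous Markov chain with transition matrix 𝒢 independent of the initial distribution. -/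
open Finset

/-- Coarse-graining operator: `(Λ p) α = ∑_{x : c x = α} p x`. -/
noncomputable def lump {N M : ℕ} (c : Fin N → Fin M) (p : Fin N → ℝ) : Fin M → ℝ :=
  fun α => ∑ x, if c x = α then p x else 0

/-- Joint probability that the lumped process visits the mesostates
`α 0, α 1, …, α n` at times `0, τ, …, nτ`, for microscopic transition matrix `T`
and initial microstate distribution `p`. -/
noncomputable def pathProb {N M : ℕ} (T : Matrix (Fin N) (Fin N) ℝ) (c : Fin N → Fin M)
    (p : Fin N → ℝ) (n : ℕ) (α : Fin (n + 1) → Fin M) : ℝ :=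
  ∑ x : Fin (n + 1) → Fin N,
    if ∀ k, c (x k) = α k then (∏ k : Fin n, T (x k.succ) (x k.castSucc)) * p (x 0) else 0

/-!
Summing the path weight first over the microstate visited last, lumpability collapses that
inner sum to one entry of `G`, whatever microstate was visited before; induction on the path
length peels off one factor of `G` at a time. Column-stochasticity of `G` is that of `T`, read
off at any representative of the block.
-/

lemma lump_nonneg {N M : ℕ} (c : Fin N → Fin M) {p : Fin N → ℝ} (hp : ∀ x, 0 ≤ p x)
    (α : Fin M) : 0 ≤ lump c p α :=
  Finset.sum_nonneg fun x _ => by split_ifs <;> simp [hp]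

lemma sum_lump {N M : ℕ} (c : Fin N → Fin M) (p : Fin N → ℝ) :
    ∑ α, lump c p α = ∑ x, p x := by
  simp only [lump]
  rw [Finset.sum_comm]
  simp

def LumpsTo {N M : ℕ} (T : Matrix (Fin N) (Fin N) ℝ) (c : Fin N → Fin M)
    (G : Matrix (Fin M) (Fin M) ℝ) : Prop :=
  ∀ α β (y : Fin N), c y = β → lump c (fun x => T x y) α = G α β

lemma pathProb_zero {N M : ℕ} (T : Matrix (Fin N) (Fin N) ℝ) (c : Fin N → Fin M)
    (p : Fin N → ℝ) (α : Fin 1 → Fin M) : pathProb T c p 0 α = lump c p (α 0) := by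
  rw [pathProb, ← (Equiv.funUnique (Fin 1) (Fin N)).symm.sum_comp]
  simp [lump, Fin.forall_fin_one]

namespace LumpsTo

variable {N M : ℕ} {T : Matrix (Fin N) (Fin N) ℝ} {c : Fin N → Fin M}
  {G : Matrix (Fin M) (Fin M) ℝ}

lemma nonneg (hG : LumpsTo T c G) (hc : Function.Surjective c) (hT : ∀ x y, 0 ≤ T x y)
    (α β : Fin M) : 0 ≤ G α β := by
  obtain ⟨y, rfl⟩ := hc β
  exact hG α _ y rfl ▸ lump_nonneg c (hT · y) α

lemma sum_eq_one (hG : LumpsTo T c G) (hc : Function.Surjective c)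
    (hT : ∀ y, ∑ x, T x y = 1) (β : Fin M) : ∑ α, G α β = 1 := by
  obtain ⟨y, rfl⟩ := hc β
  simp only [← hG _ _ y rfl, sum_lump, hT]

lemma pathProb_succ (hG : LumpsTo T c G) (p : Fin N → ℝ) (n : ℕ) (α : Fin (n + 2) → Fin M) :
    pathProb T c p (n + 1) α =
      G (α (Fin.last (n + 1))) (α (Fin.last n).castSucc) *
        pathProb T c p n (fun k => α k.castSucc) := by
  rw [pathProb, ← (Fin.snocEquiv fun _ => Fin N).sum_comp, Fintype.sum_prod_type_right,
    pathProb, Finset.mul_sum]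
  refine Finset.sum_congr rfl fun f _ => ?_
  simp only [Fin.snocEquiv_apply, Fin.forall_fin_succ' (P := fun k => c _ = α k),
    Fin.prod_univ_castSucc, Fin.succ_castSucc, Fin.succ_last, Fin.snoc_castSucc, Fin.snoc_last,
    Fin.snoc_apply_zero]
  by_cases hf : ∀ k : Fin (n + 1), c (f k) = α k.castSucc
  · simp only [hf, implies_true, true_and, if_true]
    rw [← hG _ _ _ (hf (Fin.last n)), lump, Finset.sum_mul]
    refine Finset.sum_congr rfl fun a _ => ?_
    split_ifs <;> ring
  · simp [hf]

theorem pathProb_eq (hG : LumpsTo T c G) (p : Fin N → ℝ) (n : ℕ) (α : Fin (n + 1) → Fin M) :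
    pathProb T c p n α = (∏ k : Fin n, G (α k.succ) (α k.castSucc)) * lump c p (α 0) := by
  induction n with
  | zero => simp [pathProb_zero]
  | succ n ih =>
    rw [hG.pathProb_succ, ih, Fin.prod_univ_castSucc (f := fun k => G (α k.succ) (α k.castSucc))]
    simp only [Fin.succ_castSucc, Fin.succ_last, Fin.castSucc_zero]
    ring

end LumpsTo

/-- **Theorem 2.1, sufficiency direction of the lumpability criterion.**
If the block column sums of a column-stochastic matrix `T` are independent of the
representative microstate, i.e. `∑_{x : c x = α} T x y = 𝒢 α β` for all `y` with `c y = β`,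
then `𝒢` is column-stochastic and the lumped process is a homogeneous Markov chain with
transition matrix `𝒢`, independently of the initial distribution. -/
theorem lumpability_sufficient {N M : ℕ} (T : Matrix (Fin N) (Fin N) ℝ)
    (c : Fin N → Fin M) (hc : Function.Surjective c)
    (hTnonneg : ∀ x y, 0 ≤ T x y) (hTsum : ∀ y, ∑ x, T x y = 1)
    (G : Matrix (Fin M) (Fin M) ℝ)
    (hlump : ∀ α β (y : Fin N), c y = β → (∑ x, if c x = α then T x y else 0) = G α β) :
    ((∀ α β, 0 ≤ G α β) ∧ ∀ β, ∑ α, G α β = 1) ∧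
      ∀ p : Fin N → ℝ, (∀ x, 0 ≤ p x) → (∑ x, p x = 1) →
        ∀ n : ℕ, 1 ≤ n → ∀ α : Fin (n + 1) → Fin M,
          pathProb T c p n α =
            (∏ k : Fin n, G (α k.succ) (α k.castSucc)) * lump c p (α 0) := by
  have hG : LumpsTo T c G := hlump
  exact ⟨⟨hG.nonneg hc hTnonneg, hG.sum_eq_one hc hTsum⟩,
    fun p _ _ n _ α => hG.pathProb_eq p n α⟩
end

section
/- Theorem 2.1 (necessity direction of the lumpability criterion): Let T be a column-stochastic N×N matrix and c : Fin N → Fin M a coarse-graining map. Suppose there exists a matrix 𝒢 such that for every probability vector p on Fin N and every mesostate β with (Λp) β > 0, the one-step lumped transition probability (1/(Λp) β) · ∑_{x : c x = α} ∑_{y : c y = β} T x y · p y equals 𝒢 α β for every α (i.e. the one-step transition probabilities of the lumped process are independent of the initial distribution). Then for all β, all y, y' with c y = c y' = β, and all α: ∑_{x : c x = α} T x y = ∑_{x : c x = α} T x y' = 𝒢 α β. -/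
open Finset

/-! Feeding the point mass at `y` into the hypothesis makes the conditioning trivial, and the
lumped transition probability collapses to the block column sum of `T` at `y`. -/

section PointMass

variable {N M : ℕ} (c : Fin N → Fin M)

lemma lump_pi_single_of_eq {y : Fin N} {β : Fin M} (hy : c y = β) :
    lump c (Pi.single y 1) β = 1 := by
  rw [lump, Fintype.sum_eq_single y fun x hx => by simp [hx]]
  simp [hy]

lemma sum_sum_ite_mul_pi_single_of_eq (T : Matrix (Fin N) (Fin N) ℝ) (α : Fin M)
    {y : Fin N} {β : Fin M} (hy : c y = β) :
    (∑ x, ∑ y', if c x = α ∧ c y' = β then T x y' * (Pi.single y 1 : Fin N → ℝ) y' else 0) =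
      ∑ x, if c x = α then T x y else 0 := by
  refine sum_congr rfl fun x _ => ?_
  rw [Fintype.sum_eq_single y fun y' hy' => by simp [hy']]
  simp [hy]

end PointMass

theorem lumpability_necessary_general {N M : ℕ} (T : Matrix (Fin N) (Fin N) ℝ)
    (c : Fin N → Fin M)
    (G : Matrix (Fin M) (Fin M) ℝ)
    (h : ∀ p : Fin N → ℝ, (∀ x, 0 ≤ p x) → (∑ x, p x = 1) →
      ∀ β, 0 < lump c p β →
        ∀ α, (1 / lump c p β) *
          (∑ x, ∑ y, if c x = α ∧ c y = β then T x y * p y else 0) = G α β) :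
    ∀ (β : Fin M) (y y' : Fin N), c y = β → c y' = β → ∀ α,
      (∑ x, if c x = α then T x y else 0) = G α β ∧
      (∑ x, if c x = α then T x y' else 0) = G α β := by
  have block_colSum_eq {β : Fin M} {y : Fin N} (hy : c y = β) (α : Fin M) :
      (∑ x, if c x = α then T x y else 0) = G α β := by
    have hnonneg : ∀ x, 0 ≤ (Pi.single y 1 : Fin N → ℝ) x := fun x => by
      rcases eq_or_ne x y with rfl | hx <;> simp [*]
    have hpos : 0 < lump c (Pi.single y 1) β := by rw [lump_pi_single_of_eq c hy]; exact one_pos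
    have := h (Pi.single y 1) hnonneg (by simp) β hpos α
    rwa [lump_pi_single_of_eq c hy, div_one, one_mul,
      sum_sum_ite_mul_pi_single_of_eq c T α hy] at this
  intro β y y' hy hy' α
  exact ⟨block_colSum_eq hy α, block_colSum_eq hy' α⟩

/-- **Theorem 2.1, necessity direction of the lumpability criterion.**
If the one-step transition probabilities of the lumped process are independent of the
initial distribution (given by a fixed matrix `𝒢`), then the block column sums of `T`
do not depend on the representative microstate:
`∑_{x : c x = α} T x y = ∑_{x : c x = α} T x y' = 𝒢 α β` whenever `c y = c y' = β`. -/
theorem lumpability_necessary {N M : ℕ} (T : Matrix (Fin N) (Fin N) ℝ)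
    (c : Fin N → Fin M)
    (hTnonneg : ∀ x y, 0 ≤ T x y) (hTsum : ∀ y, ∑ x, T x y = 1)
    (G : Matrix (Fin M) (Fin M) ℝ)
    (h : ∀ p : Fin N → ℝ, (∀ x, 0 ≤ p x) → (∑ x, p x = 1) →
      ∀ β, 0 < lump c p β →
        ∀ α, (1 / lump c p β) *
          (∑ x, ∑ y, if c x = α ∧ c y = β then T x y * p y else 0) = G α β) :
    ∀ (β : Fin M) (y y' : Fin N), c y = β → c y' = β → ∀ α,
      (∑ x, if c x = α then T x y else 0) = G α β ∧
      (∑ x, if c x = α then T x y' else 0) = G α β :=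
  lumpability_necessary_general T c G h
end

section
/- Corollary 2.1 (lumpable master equation, autonomous case): Let W be an N×N rate matrix (nonnegative off-diagonal entries, every column sums to 0) and c : Fin N → Fin M a coarse-graining map. Assume the lumpability condition: for all α, β and all y, y' with c y = c y' = β, ∑_{x : c x = α} W x y = ∑_{x : c x = α} W x y' =: 𝒱 α β. Then 𝒱 is a rate matrix on Fin M, and Λ · exp(t W) = exp(t 𝒱) · Λ for every t ∈ ℝ; in particular, for every solution p(t) = exp(t W) p(0) of the master equation d/dt p = W p, the lumped state Λ p(t) solves the lumped master equation d/dt (Λ p) = 𝒱 (Λ p). -/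
open Matrix Finset

/-- The coarse-graining operator `Λ` as an `M × N` matrix:
`Λ α x = 1` if `c x = α` and `0` otherwise. -/
noncomputable def lumpMat {N M : ℕ} (c : Fin N → Fin M) : Matrix (Fin M) (Fin N) ℝ :=
  Matrix.of fun α x => if c x = α then (1 : ℝ) else 0

/-!
Lumpability says exactly that `Λ` intertwines the generators, `Λ W = V Λ`. Intertwining passes
to every power, hence termwise through the exponential series to `Λ exp (t W) = exp (t V) Λ`;
likewise `Λ (W p) = V (Λ p)` turns the master equation for `p` into the lumped one. Column `β`
of `V` is the lump of any column `y` of `W` with `c y = β` (one exists by surjectivity), which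
carries the sign and zero-column-sum conditions over from `W` to `V`.
-/

namespace Matrix

variable {𝕂 m n : Type*} [RCLike 𝕂] [Fintype m] [Fintype n] [DecidableEq m] [DecidableEq n]

open scoped Norms.Operator in
theorem mul_exp_eq_exp_mul_of_mul_eq {X : Matrix m n 𝕂} {A : Matrix n n 𝕂}
    {B : Matrix m m 𝕂} (h : X * A = B * X) : X * NormedSpace.exp A = NormedSpace.exp B * X := by
  have hpow : ∀ k : ℕ, X * A ^ k = B ^ k * X := by
    intro k
    induction k with
    | zero => simp
    | succ k ih =>
      rw [pow_succ, pow_succ, ← Matrix.mul_assoc, ih, Matrix.mul_assoc, h, Matrix.mul_assoc]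
  have hA := (NormedSpace.exp_series_hasSum_exp' (𝕂 := 𝕂) A).map (mulLeftLinearMap n 𝕂 X)
    (continuous_const.matrix_mul continuous_id)
  have hB := (NormedSpace.exp_series_hasSum_exp' (𝕂 := 𝕂) B).map (mulRightLinearMap m 𝕂 X)
    (continuous_id.matrix_mul continuous_const)
  simp only [Function.comp_def, mulLeftLinearMap_apply, mulRightLinearMap_apply, Matrix.mul_smul,
    Matrix.smul_mul, hpow] at hA hB
  exact hA.unique hB

open scoped Norms.Operator in
theorem hasDerivAt_exp_smul_mulVec (A : Matrix n n 𝕂) (v : n → 𝕂) (t : 𝕂) :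
    HasDerivAt (fun s : 𝕂 => NormedSpace.exp (s • A) *ᵥ v)
      (A *ᵥ (NormedSpace.exp (t • A) *ᵥ v)) t := by
  let mulVecRight : Matrix n n 𝕂 →L[𝕂] n → 𝕂 :=
    LinearMap.toContinuousLinearMap ((mulVecBilin 𝕂 𝕂).flip v)
  rw [mulVec_mulVec]
  exact mulVecRight.hasFDerivAt.comp_hasDerivAt t (hasDerivAt_exp_smul_const' A t)

end Matrix

def IsRateMatrix {ι : Type*} [Fintype ι] (A : Matrix ι ι ℝ) : Prop :=
  (∀ i j, i ≠ j → 0 ≤ A i j) ∧ ∀ j, ∑ i, A i j = 0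

section Lumping

variable {N M : ℕ} (c : Fin N → Fin M)

theorem lumpMat_mul_apply {n : Type*} (A : Matrix (Fin N) n ℝ) (α : Fin M) (y : n) :
    (lumpMat c * A) α y = ∑ x, if c x = α then A x y else 0 := by
  simp [lumpMat, mul_apply, ite_mul]

theorem mul_lumpMat_apply {m : Type*} (B : Matrix m (Fin M) ℝ) (i : m) (y : Fin N) :
    (B * lumpMat c) i y = B i (c y) := by
  simp [lumpMat, mul_apply, mul_ite]

theorem lump_eq_mulVec (p : Fin N → ℝ) : lump c p = lumpMat c *ᵥ p := by
  funext α
  simp [lump, lumpMat, mulVec, dotProduct, ite_mul]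

variable {c}

theorem lumpMat_mul_eq_mul_lumpMat {W : Matrix (Fin N) (Fin N) ℝ} {V : Matrix (Fin M) (Fin M) ℝ}
    (hlump : ∀ α β (y : Fin N), c y = β → (∑ x, if c x = α then W x y else 0) = V α β) :
    lumpMat c * W = V * lumpMat c := by
  ext α y
  rw [lumpMat_mul_apply, mul_lumpMat_apply, hlump α (c y) y rfl]

theorem IsRateMatrix.of_lumpMat_mul_eq (hc : Function.Surjective c)
    {W : Matrix (Fin N) (Fin N) ℝ} {V : Matrix (Fin M) (Fin M) ℝ} (hW : IsRateMatrix W)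
    (h : lumpMat c * W = V * lumpMat c) : IsRateMatrix V := by
  have hV : ∀ α y, V α (c y) = ∑ x, if c x = α then W x y else 0 := fun α y => by
    rw [← mul_lumpMat_apply c V, ← h, lumpMat_mul_apply]
  constructor
  · intro α β hαβ
    obtain ⟨y, rfl⟩ := hc β
    rw [hV]
    refine sum_nonneg fun x _ => ?_
    split_ifs with hx
    · exact hW.1 x y fun hxy => hαβ (by rw [← hx, hxy])
    · exact le_rfl
  · intro β
    obtain ⟨y, rfl⟩ := hc β
    simp_rw [hV]
    rw [sum_comm]
    simpa using hW.2 y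

theorem lump_mulVec_of_lumpMat_mul_eq {W : Matrix (Fin N) (Fin N) ℝ}
    {V : Matrix (Fin M) (Fin M) ℝ} (h : lumpMat c * W = V * lumpMat c) (p : Fin N → ℝ) :
    lump c (W *ᵥ p) = V *ᵥ lump c p := by
  rw [lump_eq_mulVec, lump_eq_mulVec, mulVec_mulVec, h, ← mulVec_mulVec]

theorem HasDerivAt.lump_apply {p : ℝ → Fin N → ℝ} {p' : Fin N → ℝ} {t : ℝ}
    (hp : HasDerivAt p p' t) (α : Fin M) :
    HasDerivAt (fun s => lump c (p s) α) (lump c p' α) t := by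
  refine HasDerivAt.fun_sum fun x _ => ?_
  split_ifs
  · exact hasDerivAt_pi.1 hp x
  · exact hasDerivAt_const t 0

end Lumping

/-- **Corollary 2.1 (lumpable master equation, autonomous case).**
Let `W` be a rate matrix (nonnegative off-diagonal entries, columns summing to `0`)
satisfying the lumpability condition `∑_{x : c x = α} W x y = 𝒱 α β` for every `y` with
`c y = β`. Then `𝒱` is a rate matrix and `Λ · exp(t W) = exp(t 𝒱) · Λ` for all `t`;
in particular every solution `p(t) = exp(t W) p(0)` of the master equation has a lumped
state `Λ p(t)` solving the lumped master equation `d/dt (Λ p) = 𝒱 (Λ p)`. -/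
theorem lumpable_master_equation {N M : ℕ} (c : Fin N → Fin M) (hc : Function.Surjective c)
    (W : Matrix (Fin N) (Fin N) ℝ)
    (hWoff : ∀ x y, x ≠ y → 0 ≤ W x y) (hWsum : ∀ y, ∑ x, W x y = 0)
    (V : Matrix (Fin M) (Fin M) ℝ)
    (hlump : ∀ α β (y : Fin N), c y = β → (∑ x, if c x = α then W x y else 0) = V α β) :
    ((∀ α β, α ≠ β → 0 ≤ V α β) ∧ ∀ β, ∑ α, V α β = 0) ∧
    (∀ t : ℝ, lumpMat c * NormedSpace.exp (t • W) = NormedSpace.exp (t • V) * lumpMat c) ∧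
    ∀ (p₀ : Fin N → ℝ) (t : ℝ) (α : Fin M),
      HasDerivAt (fun s : ℝ => lump c (NormedSpace.exp (s • W) *ᵥ p₀) α)
        ((V *ᵥ lump c (NormedSpace.exp (t • W) *ᵥ p₀)) α) t := by
  have hΛ : lumpMat c * W = V * lumpMat c := lumpMat_mul_eq_mul_lumpMat hlump
  refine ⟨IsRateMatrix.of_lumpMat_mul_eq hc ⟨hWoff, hWsum⟩ hΛ, fun t => ?_,
    fun p₀ t α => ?_⟩
  · refine mul_exp_eq_exp_mul_of_mul_eq ?_
    rw [Matrix.mul_smul, hΛ, Matrix.smul_mul]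
  · rw [← lump_mulVec_of_lumpMat_mul_eq hΛ]
    exact (hasDerivAt_exp_smul_mulVec W p₀ t).lump_apply α
end

section
/- Theorem 2.2 (nonnegative entropy production rate, instantaneous form): Let V be an M×M rate matrix (nonnegative off-diagonal entries, every column sums to 0) — the generator of the mesolevel master equation at an instant where the dynamics is 1-Markovian — let π be a strictly positive probability vector on Fin M with V π = 0 (π is an instantaneous fixed point of the generator), and let p be a strictly positive probability vector on Fin M. Then the entropy production rate Σ̇ = −∑_α (V p)_α · (log p_α − log π_α) is nonnegative. -/
/-!
Writing `r = p / π`, the column sums of `V` turn `Σ̇` into `∑_{α,β} V_{αβ} p_β (log r_β - log r_α)`,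
while together with `V π = 0` they make `∑_{α,β} V_{αβ} π_β (r_β - r_α)` vanish. Termwise the first
sum dominates the second: on the diagonal both terms are `0`, and off the diagonal `V_{αβ} ≥ 0`
and `b (log b - log a) ≥ b - a` for `a, b > 0`, which is `log x ≤ x - 1` at `x = a / b`.
-/

open Matrix Finset

lemma Real.sub_le_mul_log_sub_log {a b : ℝ} (ha : 0 < a) (hb : 0 < b) :
    b - a ≤ b * (Real.log b - Real.log a) := by
  have h := Real.one_sub_inv_le_log_of_pos (div_pos hb ha)
  rw [Real.log_div hb.ne' ha.ne', inv_div] at h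
  have := mul_le_mul_of_nonneg_left h hb.le
  rwa [mul_one_sub, mul_div_cancel₀ a hb.ne'] at this

namespace Matrix

variable {ι : Type*} [Fintype ι] {V : Matrix ι ι ℝ}

lemma neg_sum_mulVec_mul_eq_sum_sum (hV : ∀ β, ∑ α, V α β = 0) (p f : ι → ℝ) :
    -∑ α, (V *ᵥ p) α * f α = ∑ α, ∑ β, V α β * p β * (f β - f α) := by
  have hcol : ∑ α, ∑ β, V α β * p β * f β = 0 := by
    rw [sum_comm]
    exact sum_eq_zero fun β _ => by rw [← sum_mul, ← sum_mul, hV, zero_mul, zero_mul]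
  simp only [mul_sub, sum_sub_distrib, hcol, zero_sub, mulVec, dotProduct, sum_mul]

end Matrix

theorem entropy_production_rate_nonneg_general {M : ℕ} (V : Matrix (Fin M) (Fin M) ℝ)
    (hVoff : ∀ α β, α ≠ β → 0 ≤ V α β) (hVsum : ∀ β, ∑ α, V α β = 0)
    (π : Fin M → ℝ) (hπpos : ∀ α, 0 < π α)
    (hfix : V *ᵥ π = 0)
    (p : Fin M → ℝ) (hppos : ∀ α, 0 < p α) :
    0 ≤ -∑ α, (V *ᵥ p) α * (Real.log (p α) - Real.log (π α)) := by
  set r : Fin M → ℝ := fun α => p α / π α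
  have hr : ∀ α, 0 < r α := fun α => div_pos (hppos α) (hπpos α)
  have hp : ∀ α, p α = π α * r α := fun α => (mul_div_cancel₀ _ (hπpos α).ne').symm
  have hlog : ∀ α, Real.log (p α) - Real.log (π α) = Real.log (r α) := fun α =>
    (Real.log_div (hppos α).ne' (hπpos α).ne').symm
  have hterm : ∀ α β,
      V α β * π β * (r β - r α) ≤ V α β * p β * (Real.log (r β) - Real.log (r α)) := by
    intro α β
    rcases eq_or_ne α β with rfl | hne
    · simp
    rw [hp, mul_assoc, mul_assoc, mul_assoc]
    exact mul_le_mul_of_nonneg_left (mul_le_mul_of_nonneg_left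
      (Real.sub_le_mul_log_sub_log (hr α) (hr β)) (hπpos β).le) (hVoff α β hne)
  simp_rw [hlog]
  calc (0 : ℝ) = ∑ α, ∑ β, V α β * π β * (r β - r α) := by
        simpa [hfix] using neg_sum_mulVec_mul_eq_sum_sum hVsum π r
    _ ≤ ∑ α, ∑ β, V α β * p β * (Real.log (r β) - Real.log (r α)) :=
        sum_le_sum fun α _ => sum_le_sum fun β _ => hterm α β
    _ = -∑ α, (V *ᵥ p) α * Real.log (r α) := (neg_sum_mulVec_mul_eq_sum_sum hVsum p _).symm

/-- **Theorem 2.2 (nonnegative entropy production rate, instantaneous form).**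
Let `V` be a rate matrix (nonnegative off-diagonal entries, columns summing to `0`),
the generator of the mesolevel master equation at an instant where the dynamics is
1-Markovian, let `π` be a strictly positive probability vector with `V π = 0`
(an instantaneous fixed point), and let `p` be a strictly positive probability vector.
Then the entropy production rate `Σ̇ = −∑_α (V p)_α (log p_α − log π_α)` is nonnegative. -/
theorem entropy_production_rate_nonneg {M : ℕ} (V : Matrix (Fin M) (Fin M) ℝ)
    (hVoff : ∀ α β, α ≠ β → 0 ≤ V α β) (hVsum : ∀ β, ∑ α, V α β = 0)
    (π : Fin M → ℝ) (hπpos : ∀ α, 0 < π α) (hπsum : ∑ α, π α = 1)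
    (hfix : V *ᵥ π = 0)
    (p : Fin M → ℝ) (hppos : ∀ α, 0 < p α) (hpsum : ∑ α, p α = 1) :
    0 ≤ -∑ α, (V *ᵥ p) α * (Real.log (p α) - Real.log (π α)) :=
  entropy_production_rate_nonneg_general V hVoff hVsum π hπpos hfix p hppos
end

section
/- Theorem 2.4: Let (T_t)_{t ≥ 0} be a family of column-stochastic N×N matrices with T_t π = π for all t, where π is a strictly positive probability vector on Fin N (the steady state of the undriven microscopic process). Let c : Fin N → Fin M be a coarse-graining map and define the lumped propagator for conditionally equilibrated initial states by G_t α β = ∑_{x : c x = α} ∑_{y : c y = β} T_t x y · π y / (Λπ) β. Then: (i) G_t (Λπ) = Λπ for every t ≥ 0; (ii) if moreover each G_t is invertible and t ↦ G_t is differentiable, then the time-local generator V(t) = (d/dt G_t) · G_t⁻¹ of the exact mesolevel master equation satisfies V(t) (Λπ) = 0, i.e. the marginal steady state Λπ is an instantaneous fixed point of the mesolevel dynamics at every time. -/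
open Matrix Finset

section Lumping

variable {N M : ℕ} (c : Fin N → Fin M)

noncomputable def lumpedPropagator (T : Matrix (Fin N) (Fin N) ℝ) (π : Fin N → ℝ) :
    Matrix (Fin M) (Fin M) ℝ :=
  Matrix.of fun α β => ∑ x, ∑ y, if c x = α ∧ c y = β then T x y * π y / lump c π β else 0

variable {c}

theorem le_lump_apply {p : Fin N → ℝ} (hp : ∀ x, 0 ≤ p x) (y : Fin N) :
    p y ≤ lump c p (c y) := by
  unfold lump
  simpa using single_le_sum (f := fun x => if c x = c y then p x else 0)
    (fun x _ => by split_ifs <;> simp [hp x]) (mem_univ y)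

theorem lump_apply_pos {p : Fin N → ℝ} (hp : ∀ x, 0 < p x) (y : Fin N) :
    0 < lump c p (c y) :=
  (hp y).trans_le (le_lump_apply (fun x => (hp x).le) y)

theorem lumpedPropagator_mulVec_lump (T : Matrix (Fin N) (Fin N) ℝ) {π : Fin N → ℝ}
    (hπ : ∀ x, 0 < π x) : lumpedPropagator c T π *ᵥ lump c π = lump c (T *ᵥ π) := by
  funext α
  have cancel : ∀ β x y, (if c x = α ∧ c y = β then T x y * π y / lump c π β else 0) *
      lump c π β = if c y = β then (if c x = α then T x y * π y else 0) else 0 := by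
    intro β x y
    by_cases hy : c y = β
    · subst hy
      split_ifs <;> simp_all [div_mul_cancel₀ _ (lump_apply_pos hπ y).ne']
    · simp [hy]
  calc (lumpedPropagator c T π *ᵥ lump c π) α
      = ∑ β, ∑ x, ∑ y, if c y = β then (if c x = α then T x y * π y else 0) else 0 := by
        simp only [mulVec, dotProduct, lumpedPropagator, of_apply, sum_mul]
        exact sum_congr rfl fun β _ => sum_congr rfl fun x _ => sum_congr rfl fun y _ =>
          cancel β x y
    _ = ∑ x, if c x = α then ∑ y, T x y * π y else 0 := by
        rw [sum_comm]
        refine sum_congr rfl fun x _ => ?_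
        rw [sum_comm]
        simp only [sum_ite_eq, mem_univ, if_true]
        split_ifs <;> simp
    _ = lump c (T *ᵥ π) α := rfl

end Lumping

theorem HasDerivAt.eq_zero_of_forall_Ici_eq {f : ℝ → ℝ} {f' t : ℝ} (hf : HasDerivAt f f' t)
    (hconst : ∀ s, t ≤ s → f s = f t) : f' = 0 :=
  (uniqueDiffWithinAt_Ici t).eq_deriv _ hf.hasDerivWithinAt
    ((hasDerivWithinAt_const t _ (f t)).congr (fun s hs => hconst s hs) rfl)

theorem Matrix.hasDerivAt_mulVec_apply {m n : Type*} [Fintype n] {A A' : ℝ → Matrix m n ℝ}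
    {t : ℝ} (hA : ∀ i j, HasDerivAt (fun s => A s i j) (A' t i j) t) (v : n → ℝ) (i : m) :
    HasDerivAt (fun s => (A s *ᵥ v) i) ((A' t *ᵥ v) i) t :=
  HasDerivAt.fun_sum fun j _ => (hA i j).mul_const (v j)

theorem Matrix.mulVec_eq_zero_of_forall_Ici_mulVec_eq {m n : Type*} [Fintype n]
    {A A' : ℝ → Matrix m n ℝ} {t : ℝ} (hA : ∀ i j, HasDerivAt (fun s => A s i j) (A' t i j) t)
    {v : n → ℝ} {w : m → ℝ} (hfix : ∀ s, t ≤ s → A s *ᵥ v = w) : A' t *ᵥ v = 0 := by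
  funext i
  refine (hasDerivAt_mulVec_apply hA v i).eq_zero_of_forall_Ici_eq fun s hs => ?_
  rw [hfix s hs, hfix t le_rfl]

theorem Matrix.mul_nonsing_inv_mulVec_eq_zero {n R : Type*} [Fintype n] [DecidableEq n]
    [CommRing R] {A B : Matrix n n R} (hA : IsUnit A) {v : n → R} (hAv : A *ᵥ v = v)
    (hBv : B *ᵥ v = 0) : (B * A⁻¹) *ᵥ v = 0 := by
  have hinv : A⁻¹ *ᵥ v = v := by
    conv_lhs => rw [← hAv]
    rw [mulVec_mulVec, nonsing_inv_mul _ ((isUnit_iff_isUnit_det A).mp hA), one_mulVec]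
  rw [← mulVec_mulVec, hinv, hBv]

theorem undriven_marginal_steady_state_is_IFP_general {N M : ℕ} (c : Fin N → Fin M)
    (T : ℝ → Matrix (Fin N) (Fin N) ℝ)
    (π : Fin N → ℝ) (hπpos : ∀ x, 0 < π x)
    (hTfix : ∀ t, 0 ≤ t → T t *ᵥ π = π)
    (G : ℝ → Matrix (Fin M) (Fin M) ℝ)
    (hG : ∀ t α β,
      G t α β = ∑ x, ∑ y, if c x = α ∧ c y = β then T t x y * π y / lump c π β else 0) :
    (∀ t, 0 ≤ t → G t *ᵥ lump c π = lump c π) ∧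
    ∀ G' : ℝ → Matrix (Fin M) (Fin M) ℝ,
      (∀ t, 0 ≤ t → IsUnit (G t)) →
      (∀ t, 0 ≤ t → ∀ α β, HasDerivAt (fun s => G s α β) (G' t α β) t) →
      ∀ t, 0 ≤ t → (G' t * (G t)⁻¹) *ᵥ lump c π = 0 := by
  have hGeq : ∀ t, G t = lumpedPropagator c (T t) π := fun t => Matrix.ext (hG t)
  have hfix : ∀ t, 0 ≤ t → G t *ᵥ lump c π = lump c π := fun t ht => by
    rw [hGeq, lumpedPropagator_mulVec_lump _ hπpos, hTfix t ht]
  refine ⟨hfix, fun G' hunit hderiv t ht => ?_⟩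
  have hG'fix : G' t *ᵥ lump c π = 0 :=
    mulVec_eq_zero_of_forall_Ici_mulVec_eq (hderiv t ht) fun s hs => hfix s (ht.trans hs)
  exact mul_nonsing_inv_mulVec_eq_zero (hunit t ht) (hfix t ht) hG'fix

/-- **Theorem 2.4.** For an undriven microscopic process with column-stochastic propagators
`T_t` having the strictly positive steady state `π` (`T_t π = π`), the lumped propagator
for conditionally equilibrated initial states,
`G_t α β = ∑_{x : c x = α} ∑_{y : c y = β} T_t x y · π y / (Λπ) β`, satisfies:
(i) `G_t (Λπ) = Λπ` for every `t ≥ 0`; and (ii) if each `G_t` is invertible and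
`t ↦ G_t` is differentiable, then the time-local generator `V(t) = (d/dt G_t) · G_t⁻¹`
satisfies `V(t) (Λπ) = 0`, i.e. the marginal steady state `Λπ` is an instantaneous fixed
point of the mesolevel dynamics at every time. -/
theorem undriven_marginal_steady_state_is_IFP {N M : ℕ} (c : Fin N → Fin M)
    (T : ℝ → Matrix (Fin N) (Fin N) ℝ)
    (π : Fin N → ℝ) (hπpos : ∀ x, 0 < π x) (hπsum : ∑ x, π x = 1)
    (hTnonneg : ∀ t, 0 ≤ t → ∀ x y, 0 ≤ T t x y)
    (hTsum : ∀ t, 0 ≤ t → ∀ y, ∑ x, T t x y = 1)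
    (hTfix : ∀ t, 0 ≤ t → T t *ᵥ π = π)
    (G : ℝ → Matrix (Fin M) (Fin M) ℝ)
    (hG : ∀ t α β,
      G t α β = ∑ x, ∑ y, if c x = α ∧ c y = β then T t x y * π y / lump c π β else 0) :
    (∀ t, 0 ≤ t → G t *ᵥ lump c π = lump c π) ∧
    ∀ G' : ℝ → Matrix (Fin M) (Fin M) ℝ,
      (∀ t, 0 ≤ t → IsUnit (G t)) →
      (∀ t, 0 ≤ t → ∀ α β, HasDerivAt (fun s => G s α β) (G' t α β) t) →
      ∀ t, 0 ≤ t → (G' t * (G t)⁻¹) *ᵥ lump c π = 0 :=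
  undriven_marginal_steady_state_is_IFP_general c T π hπpos hTfix G hG
end

section
/- Theorem 2.5 (condition 1, driven case): Let W be an N×N rate matrix and π a probability vector with W π = 0 and (Λπ) α > 0 for all α. Suppose (p⁽ⁱ⁾)_{i ∈ I} is a family of probability vectors on Fin N, each conditionally equilibrated with respect to π, i.e. p⁽ⁱ⁾ x = (Λ p⁽ⁱ⁾)(c x) · π x / (Λπ)(c x), and suppose the lumped marginals {Λ p⁽ⁱ⁾ : i ∈ I} span ℝ^M. If V is an M×M matrix satisfying V (Λ p⁽ⁱ⁾) = Λ (W p⁽ⁱ⁾) for every i ∈ I (i.e. V is an exact time-local generator of the lumped dynamics at this instant, reproducing the coarse-grained time derivatives of all admissible time-evolved states), then V (Λπ) = 0, i.e. Λπ is an instantaneous fixed point of the lumped process. -/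
/-!
A conditionally equilibrated state is recovered from its lumped marginal by the linear lift
`q ↦ (x ↦ q (c x) · π x / (Λπ)(c x))`. Hence `V` agrees with `Λ ∘ W ∘ lift` on the lumped
marginals, and since these span `ℝ^M` the two linear maps are equal. The stationary state `π`
is itself conditionally equilibrated, so `V (Λπ) = Λ (W π) = 0`.
-/

open Matrix Finset

section

variable {N M : ℕ} (c : Fin N → Fin M)

def IsCondEquilibrated (π p : Fin N → ℝ) : Prop :=
  ∀ x, p x = lump c p (c x) * π x / lump c π (c x)

theorem isCondEquilibrated_self {π : Fin N → ℝ} (hπ : ∀ α, lump c π α ≠ 0) :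
    IsCondEquilibrated c π π := fun x => by
  rw [mul_comm, mul_div_assoc, div_self (hπ (c x)), mul_one]

noncomputable def lumpLinearMap : (Fin N → ℝ) →ₗ[ℝ] (Fin M → ℝ) where
  toFun := lump c
  map_add' p q := by
    funext α
    simp only [lump, Pi.add_apply, ← sum_add_distrib, ite_add_ite, add_zero]
  map_smul' a p := by
    funext α
    simp only [lump, Pi.smul_apply, smul_eq_mul, RingHom.id_apply, mul_sum, mul_ite, mul_zero]

theorem lump_zero : lump c (0 : Fin N → ℝ) = 0 :=
  map_zero (lumpLinearMap c)

noncomputable def condEqLift (π : Fin N → ℝ) : (Fin M → ℝ) →ₗ[ℝ] (Fin N → ℝ) where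
  toFun q x := q (c x) * π x / lump c π (c x)
  map_add' q r := by
    funext x
    simp only [Pi.add_apply]
    ring
  map_smul' a q := by
    funext x
    simp only [Pi.smul_apply, smul_eq_mul, RingHom.id_apply]
    ring

theorem IsCondEquilibrated.condEqLift_lump {π p : Fin N → ℝ} (hp : IsCondEquilibrated c π p) :
    condEqLift c π (lump c p) = p :=
  funext fun x => (hp x).symm

theorem mulVec_eq_lump_mulVec_condEqLift {π : Fin N → ℝ} {I : Type*} {p : I → Fin N → ℝ}
    (hcondeq : ∀ i, IsCondEquilibrated c π (p i))
    (hspan : Submodule.span ℝ (Set.range fun i => lump c (p i)) = ⊤)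
    {W : Matrix (Fin N) (Fin N) ℝ} {V : Matrix (Fin M) (Fin M) ℝ}
    (hV : ∀ i, V *ᵥ lump c (p i) = lump c (W *ᵥ p i)) (q : Fin M → ℝ) :
    V *ᵥ q = lump c (W *ᵥ condEqLift c π q) := by
  have hmaps : V.mulVecLin = lumpLinearMap c ∘ₗ W.mulVecLin ∘ₗ condEqLift c π :=
    LinearMap.ext_on_range hspan fun i => by
      simp only [LinearMap.comp_apply, mulVecLin_apply, (hcondeq i).condEqLift_lump, hV]
      rfl
  exact LinearMap.congr_fun hmaps q

end

theorem driven_IFP_of_conditional_equilibrium_general {N M : ℕ} (c : Fin N → Fin M)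
    (W : Matrix (Fin N) (Fin N) ℝ)
    (π : Fin N → ℝ)
    (hfix : W *ᵥ π = 0) (hΛπpos : ∀ α, 0 < lump c π α)
    {I : Type*} (p : I → Fin N → ℝ)
    (hcondeq : ∀ i x, p i x = lump c (p i) (c x) * π x / lump c π (c x))
    (hspan : Submodule.span ℝ (Set.range fun i => lump c (p i)) = ⊤)
    (V : Matrix (Fin M) (Fin M) ℝ)
    (hV : ∀ i, V *ᵥ lump c (p i) = lump c (W *ᵥ p i)) :
    V *ᵥ lump c π = 0 := by
  have hπeq : IsCondEquilibrated c π π := isCondEquilibrated_self c fun α => (hΛπpos α).ne'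
  rw [mulVec_eq_lump_mulVec_condEqLift c hcondeq hspan hV, hπeq.condEqLift_lump, hfix, lump_zero]

/-- **Theorem 2.5 (condition 1, driven case).** Let `W` be a rate matrix with fixed point
`π` (a probability vector with `W π = 0` and `(Λπ) α > 0` for all `α`). Let `(p⁽ⁱ⁾)_{i ∈ I}`
be a family of probability vectors, each conditionally equilibrated with respect to `π`,
whose lumped marginals span `ℝ^M`. If `V` is an `M × M` matrix reproducing the
coarse-grained time derivatives of all these states, `V (Λ p⁽ⁱ⁾) = Λ (W p⁽ⁱ⁾)`,
then `V (Λπ) = 0`: `Λπ` is an instantaneous fixed point of the lumped process. -/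
theorem driven_IFP_of_conditional_equilibrium {N M : ℕ} (c : Fin N → Fin M)
    (W : Matrix (Fin N) (Fin N) ℝ)
    (hWoff : ∀ x y, x ≠ y → 0 ≤ W x y) (hWsum : ∀ y, ∑ x, W x y = 0)
    (π : Fin N → ℝ) (hπ : ∀ x, 0 ≤ π x) (hπsum : ∑ x, π x = 1)
    (hfix : W *ᵥ π = 0) (hΛπpos : ∀ α, 0 < lump c π α)
    {I : Type*} (p : I → Fin N → ℝ)
    (hp : ∀ i, ∀ x, 0 ≤ p i x) (hpsum : ∀ i, ∑ x, p i x = 1)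
    (hcondeq : ∀ i x, p i x = lump c (p i) (c x) * π x / lump c π (c x))
    (hspan : Submodule.span ℝ (Set.range fun i => lump c (p i)) = ⊤)
    (V : Matrix (Fin M) (Fin M) ℝ)
    (hV : ∀ i, V *ᵥ lump c (p i) = lump c (W *ᵥ p i)) :
    V *ᵥ lump c π = 0 :=
  driven_IFP_of_conditional_equilibrium_general c W π hfix hΛπpos p hcondeq hspan V hV
end

section
/- Theorem 3.1 (integrated second law at the mesolevel dominates the microlevel one): Fix β > 0 and energies E : ℝ → Fin N → ℝ of the bipartite form E t x = Ē t (c x) + Ẽ x with t ↦ Ē t α continuously differentiable. Let W : ℝ → (N×N rate matrices) be continuous and satisfy local detailed balance: for all x ≠ y and all t, W t x y · exp(−β · E t y) = W t y x · exp(−β · E t x); consequently the Gibbs state π t x = exp(−β E t x)/Z t with Z t = ∑_x exp(−β E t x) satisfies W t (π t) = 0. Let p : [0,∞) → (probability vectors on Fin N) solve d/dt p t = W t (p t), with p t strictly positive for every t ≥ 0, and assume the initial state is conditionally equilibrated: p 0 x = (Λ p 0)(c x) · π 0 x / (Λ π 0)(c x). Define the work W_wk(t) = ∫₀ᵗ ∑_x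 (∂_s E s x) · p s x ds, the microscopic nonequilibrium free energy F_mic(t) = ∑_x E t x · p t x + β⁻¹ ∑_x p t x · log(p t x), the mesoscopic free energies F_α(t) = −β⁻¹ log ∑_{x : c x = α} exp(−β E t x) and F(t) = ∑_α (Λ p t) α · (F_α(t) + β⁻¹ log (Λ p t) α). Then for every t ≥ 0: Σ(t) := β·(W_wk(t) − F(t) + F(0)) ≥ Σ_mic(t) := β·(W_wk(t) − F_mic(t) + F_mic(0)) ≥ 0. -/
open Matrix Finset

/-- The Gibbs state `π x = exp(−β E x) / Z` with `Z = ∑_y exp(−β E y)`. -/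
noncomputable def gibbs {N : ℕ} (β : ℝ) (E : Fin N → ℝ) : Fin N → ℝ :=
  fun x => Real.exp (-β * E x) / ∑ y, Real.exp (-β * E y)

/-- The work done on the system up to time `t`:
`W_wk(t) = ∫₀ᵗ ∑_x (∂_s E s x) · p s x ds`. -/
noncomputable def workDone {N : ℕ} (E : ℝ → Fin N → ℝ) (p : ℝ → Fin N → ℝ) (t : ℝ) : ℝ :=
  ∫ s in (0:ℝ)..t, ∑ x, deriv (fun u => E u x) s * p s x

/-- The microscopic nonequilibrium free energy
`F_mic(t) = ∑_x E t x · p t x + β⁻¹ ∑_x p t x · log (p t x)`. -/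
noncomputable def freeMic {N : ℕ} (β : ℝ) (E : ℝ → Fin N → ℝ) (p : ℝ → Fin N → ℝ)
    (t : ℝ) : ℝ :=
  (∑ x, E t x * p t x) + β⁻¹ * ∑ x, p t x * Real.log (p t x)

/-- The mesoscopic nonequilibrium free energy
`F(t) = ∑_α (Λ p t) α · (F_α(t) + β⁻¹ log (Λ p t) α)` with
`F_α(t) = −β⁻¹ log ∑_{x : c x = α} exp(−β E t x)`. -/
noncomputable def freeMeso {N M : ℕ} (β : ℝ) (E : ℝ → Fin N → ℝ) (c : Fin N → Fin M)
    (p : ℝ → Fin N → ℝ) (t : ℝ) : ℝ :=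
  ∑ α, lump c (p t) α *
    ((-β⁻¹ * Real.log (∑ x, if c x = α then Real.exp (-β * E t x) else 0)) +
      β⁻¹ * Real.log (lump c (p t) α))

/-!
With `ν = exp (-β E)`, the gap `F_mic - F` is `β⁻¹` times the relative entropy of `p` from the
state with the same mesostate marginal that is conditionally equilibrated with respect to `ν`.
By Gibbs' inequality the gap is nonnegative, and the initial condition makes it vanish at
`t = 0`; hence `Σ ≥ Σ_mic`.

Along the master equation, `d/dt (W_wk - F_mic) = -β⁻¹ ∑_x ṗ_x log (p_x / ν_x)`. Detailed balance
makes `k x y = W x y ν y` symmetric, and with `a = p / ν` the rate becomes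
`(2β)⁻¹ ∑_{x,y} k x y (a_x - a_y)(log a_x - log a_y) ≥ 0`. So `W_wk - F_mic` is nondecreasing,
which gives `Σ_mic ≥ 0`.
-/

open Real Set

section Lumping

variable {N M : ℕ} (c : Fin N → Fin M)

theorem sum_lump_mul (q : Fin N → ℝ) (f : Fin M → ℝ) :
    ∑ α, lump c q α * f α = ∑ x, q x * f (c x) := by
  simp only [lump, sum_mul, ite_mul, zero_mul]
  rw [sum_comm]
  simp

theorem lump_pos {q : Fin N → ℝ} (hq : ∀ x, 0 < q x) (x : Fin N) : 0 < lump c q (c x) :=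
  sum_pos' (fun y _ => by split_ifs <;> simp [(hq y).le])
    ⟨x, mem_univ x, by simp [hq x]⟩

noncomputable def condEquil (q w : Fin N → ℝ) (x : Fin N) : ℝ :=
  lump c q (c x) * w x / lump c w (c x)

theorem condEquil_pos {q w : Fin N → ℝ} (hq : ∀ x, 0 < q x) (hw : ∀ x, 0 < w x) (x : Fin N) :
    0 < condEquil c q w x :=
  div_pos (mul_pos (lump_pos c hq x) (hw x)) (lump_pos c hw x)

theorem sum_condEquil {w : Fin N → ℝ} (hw : ∀ x, 0 < w x) (q : Fin N → ℝ) :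
    ∑ x, condEquil c q w x = ∑ x, q x := by
  have hfiber : ∀ α, lump c w α * (lump c q α / lump c w α) = lump c q α := by
    intro α
    by_cases hα : ∃ x, c x = α
    · obtain ⟨x, rfl⟩ := hα
      exact mul_div_cancel₀ _ (lump_pos c hw x).ne'
    · simp [lump, not_exists.mp hα]
  calc ∑ x, condEquil c q w x = ∑ x, w x * (lump c q (c x) / lump c w (c x)) :=
        sum_congr rfl fun x _ => by rw [condEquil]; ring
    _ = ∑ α, lump c q α := by
        rw [← sum_lump_mul c w fun α => lump c q α / lump c w α]
        exact sum_congr rfl fun α _ => hfiber α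
    _ = ∑ x, q x := by simpa using sum_lump_mul c q 1

theorem condEquil_div_const (q w : Fin N → ℝ) {Z : ℝ} (hZ : Z ≠ 0) :
    condEquil c q (fun x => w x / Z) = condEquil c q w := by
  have hlump : ∀ α, lump c (fun x => w x / Z) α = lump c w α / Z := by
    intro α
    simp only [lump, sum_div, ite_div, zero_div]
  funext x
  simp only [condEquil, hlump]
  field_simp

theorem condEquil_gibbs (q : Fin N → ℝ) (β : ℝ) (E : Fin N → ℝ) (x : Fin N) :
    condEquil c q (gibbs β E) x = condEquil c q (fun y => exp (-β * E y)) x := by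
  have hZ : 0 < ∑ y, exp (-β * E y) := sum_pos (fun y _ => exp_pos _) ⟨x, mem_univ x⟩
  exact congrFun (condEquil_div_const c q _ hZ.ne') x

end Lumping

theorem sum_mul_log_div_nonneg {ι : Type*} [Fintype ι] {q r : ι → ℝ} (hq : ∀ i, 0 < q i)
    (hr : ∀ i, 0 < r i) (hsum : ∑ i, r i ≤ ∑ i, q i) : 0 ≤ ∑ i, q i * log (q i / r i) := by
  have hterm : ∀ i, q i - r i ≤ q i * log (q i / r i) := by
    intro i
    have h := one_sub_inv_le_log_of_pos (div_pos (hq i) (hr i))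
    calc q i - r i = q i * (1 - (q i / r i)⁻¹) := by field_simp [(hq i).ne']
      _ ≤ q i * log (q i / r i) := mul_le_mul_of_nonneg_left h (hq i).le
  calc (0 : ℝ) ≤ ∑ i, (q i - r i) := by rw [sum_sub_distrib]; linarith
    _ ≤ _ := sum_le_sum fun i _ => hterm i

section FreeEnergyGap

variable {N M : ℕ} (c : Fin N → Fin M) {β : ℝ} (E : ℝ → Fin N → ℝ) (p : ℝ → Fin N → ℝ) {t : ℝ}

theorem freeMic_sub_freeMeso (hβ : β ≠ 0) (hp : ∀ x, 0 < p t x) :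
    freeMic β E p t - freeMeso β E c p t =
      β⁻¹ * ∑ x, p t x * log (p t x / condEquil c (p t) (fun y => exp (-β * E t y)) x) := by
  set ν : Fin N → ℝ := fun y => exp (-β * E t y)
  have hmeso : freeMeso β E c p t =
      ∑ x, p t x * (β⁻¹ * (log (lump c (p t) (c x)) - log (lump c ν (c x)))) := by
    rw [freeMeso, ← sum_lump_mul c (p t) fun α => β⁻¹ * (log (lump c (p t) α) - log (lump c ν α))]
    exact sum_congr rfl fun α _ => by simp only [lump, ν]; ring
  have hlog : ∀ x, log (p t x / condEquil c (p t) ν x) =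
      log (p t x) - (log (lump c (p t) (c x)) - log (lump c ν (c x))) + β * E t x := by
    intro x
    have hq := lump_pos c hp x
    have hν := lump_pos c (fun y => exp_pos (-β * E t y)) x
    rw [condEquil, log_div (hp x).ne' (by positivity), log_div (by positivity) hν.ne',
      log_mul hq.ne' (exp_pos _).ne', log_exp]
    ring
  rw [hmeso, freeMic, eq_inv_mul_iff_mul_eq₀ hβ]
  simp only [mul_sub, mul_add, mul_sum, ← sum_add_distrib, ← sum_sub_distrib]
  exact sum_congr rfl fun x _ => by rw [hlog]; field_simp; ring

theorem freeMeso_le_freeMic (hβ : 0 < β) (hp : ∀ x, 0 < p t x) :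
    freeMeso β E c p t ≤ freeMic β E p t := by
  have hν : ∀ y, 0 < exp (-β * E t y) := fun y => exp_pos _
  have hrel : 0 ≤ ∑ x, p t x * log (p t x / condEquil c (p t) (fun y => exp (-β * E t y)) x) :=
    sum_mul_log_div_nonneg hp (condEquil_pos c hp hν) (sum_condEquil c hν (p t)).le
  have := freeMic_sub_freeMeso c E p hβ.ne' hp
  have := mul_nonneg (inv_nonneg.mpr hβ.le) hrel
  linarith

theorem freeMeso_eq_freeMic_of_condEquil (hβ : β ≠ 0) (hp : ∀ x, 0 < p t x)
    (hcond : ∀ x, p t x = condEquil c (p t) (fun y => exp (-β * E t y)) x) :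
    freeMeso β E c p t = freeMic β E p t := by
  have := freeMic_sub_freeMeso c E p hβ hp
  simp only [← hcond, div_self (hp _).ne', log_one, mul_zero, sum_const_zero] at this
  linarith

end FreeEnergyGap

section MasterEquation

variable {ι : Type*} [Fintype ι]

theorem sum_mulVec_mul_eq_sum_sum {W : Matrix ι ι ℝ} (hW : ∀ y, ∑ x, W x y = 0) (q f : ι → ℝ) :
    ∑ x, (W *ᵥ q) x * f x = ∑ x, ∑ y, W x y * q y * (f x - f y) := by
  have hout : ∑ x, ∑ y, W x y * q y * f y = 0 := by
    rw [sum_comm]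
    exact sum_eq_zero fun y _ => by rw [← sum_mul, ← sum_mul, hW y, zero_mul, zero_mul]
  simp only [mul_sub, sum_sub_distrib, hout, sub_zero, mulVec, dotProduct, sum_mul]

theorem sum_mulVec_eq_zero {W : Matrix ι ι ℝ} (hW : ∀ y, ∑ x, W x y = 0) (q : ι → ℝ) :
    ∑ x, (W *ᵥ q) x = 0 := by
  simpa using sum_mulVec_mul_eq_sum_sum hW q 1

theorem sum_sum_mul_mul_sub_log_nonpos {k : ι → ι → ℝ} (hsymm : ∀ x y, k x y = k y x)
    (hk : ∀ x y, x ≠ y → 0 ≤ k x y) {a : ι → ℝ} (ha : ∀ x, 0 < a x) :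
    ∑ x, ∑ y, k x y * a y * (log (a x) - log (a y)) ≤ 0 := by
  have hterm : ∀ x y, k x y * ((a y - a x) * (log (a x) - log (a y))) ≤ 0 := by
    intro x y
    rcases eq_or_ne x y with rfl | hxy
    · simp
    refine mul_nonpos_of_nonneg_of_nonpos (hk x y hxy) ?_
    rcases le_total (a x) (a y) with h | h
    · exact mul_nonpos_of_nonneg_of_nonpos (sub_nonneg.mpr h)
        (sub_nonpos.mpr (log_le_log (ha x) h))
    · exact mul_nonpos_of_nonpos_of_nonneg (sub_nonpos.mpr h)
        (sub_nonneg.mpr (log_le_log (ha y) h))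
  -- swapping `x` and `y` and averaging symmetrises the sum
  have hswap : ∑ x, ∑ y, k x y * a y * (log (a x) - log (a y)) =
      ∑ x, ∑ y, k x y * a x * (log (a y) - log (a x)) := by
    rw [sum_comm]
    exact sum_congr rfl fun x _ => sum_congr rfl fun y _ => by rw [hsymm]
  have hsum : ∑ x, ∑ y, k x y * ((a y - a x) * (log (a x) - log (a y))) ≤ 0 :=
    sum_nonpos fun x _ => sum_nonpos fun y _ => hterm x y
  have hdouble : ∑ x, ∑ y, k x y * ((a y - a x) * (log (a x) - log (a y))) =
      ∑ x, ∑ y, k x y * a y * (log (a x) - log (a y)) +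
        ∑ x, ∑ y, k x y * a x * (log (a y) - log (a x)) := by
    simp only [← sum_add_distrib]
    exact sum_congr rfl fun x _ => sum_congr rfl fun y _ => by ring
  linarith

theorem sum_mulVec_mul_log_div_nonpos {W : Matrix ι ι ℝ} (hWoff : ∀ x y, x ≠ y → 0 ≤ W x y)
    (hWsum : ∀ y, ∑ x, W x y = 0) {ν : ι → ℝ} (hν : ∀ x, 0 < ν x)
    (hdb : ∀ x y, x ≠ y → W x y * ν y = W y x * ν x) {q : ι → ℝ} (hq : ∀ x, 0 < q x) :
    ∑ x, (W *ᵥ q) x * log (q x / ν x) ≤ 0 := by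
  have hk : ∀ x y, W x y * ν y = W y x * ν x := by
    intro x y
    rcases eq_or_ne x y with rfl | hxy
    · rfl
    · exact hdb x y hxy
  rw [sum_mulVec_mul_eq_sum_sum hWsum]
  convert sum_sum_mul_mul_sub_log_nonpos hk (fun x y hxy => mul_nonneg (hWoff x y hxy) (hν y).le)
    (fun x => div_pos (hq x) (hν x)) using 4 with x _ y _
  field_simp [(hν y).ne']

end MasterEquation

theorem monotoneOn_Ici_of_hasDerivWithinAt_nonneg {f f' : ℝ → ℝ} {a : ℝ}
    (hf : ∀ t ∈ Ici a, HasDerivWithinAt f (f' t) (Ici a) t) (hf' : ∀ t ∈ Ici a, 0 ≤ f' t) :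
    MonotoneOn f (Ici a) := by
  refine monotoneOn_of_hasDerivWithinAt_nonneg (convex_Ici a) (HasDerivWithinAt.continuousOn hf)
    (fun t ht => ?_) (fun t ht => hf' t (interior_subset ht))
  rw [interior_Ici] at ht ⊢
  exact (hf t (Ioi_subset_Ici_self ht)).mono Ioi_subset_Ici_self

section Trajectory

variable {N : ℕ} {β : ℝ} {E : ℝ → Fin N → ℝ} {p : ℝ → Fin N → ℝ}

noncomputable def workRate (E : ℝ → Fin N → ℝ) (p : ℝ → Fin N → ℝ) (s : ℝ) : ℝ :=
  ∑ x, deriv (fun u => E u x) s * p s x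

theorem hasDerivWithinAt_workDone (hP : ContinuousOn (workRate E p) (Ici 0)) {t : ℝ}
    (ht : t ∈ Ici (0 : ℝ)) : HasDerivWithinAt (workDone E p) (workRate E p t) (Ici 0) t := by
  change HasDerivWithinAt (fun u => ∫ s in (0 : ℝ)..u, workRate E p s) _ _ _
  rcases (mem_Ici.mp ht).eq_or_lt with rfl | ht
  · have hP' := hP.mono Ioi_subset_Ici_self
    exact intervalIntegral.integral_hasDerivWithinAt_right (t := Ioi 0) IntervalIntegrable.refl
      (hP'.stronglyMeasurableAtFilter_nhdsWithin measurableSet_Ioi 0)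
      ((hP 0 self_mem_Ici).mono Ioi_subset_Ici_self)
  · exact (intervalIntegral.integral_hasDerivAt_right
      ((hP.mono Icc_subset_Ici_self).intervalIntegrable_of_Icc ht.le)
      ((hP.mono Ioi_subset_Ici_self).stronglyMeasurableAtFilter isOpen_Ioi t ht)
      (hP.continuousAt (Ici_mem_nhds ht))).hasDerivWithinAt

theorem hasDerivWithinAt_freeMic {s : Set ℝ} {t : ℝ} {E' p' : Fin N → ℝ}
    (hE : ∀ x, HasDerivWithinAt (fun u => E u x) (E' x) s t)
    (hp : ∀ x, HasDerivWithinAt (fun u => p u x) (p' x) s t) (hpos : ∀ x, 0 < p t x) :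
    HasDerivWithinAt (freeMic β E p)
      ((∑ x, (E' x * p t x + E t x * p' x)) + β⁻¹ * ∑ x, (p' x * log (p t x) + p' x)) s t := by
  refine (HasDerivWithinAt.fun_sum fun x _ => (hE x).mul (hp x)).add
    ((HasDerivWithinAt.fun_sum fun x _ => ?_).const_mul β⁻¹)
  have h := (hp x).fun_mul ((hp x).log (hpos x).ne')
  rwa [mul_div_cancel₀ _ (hpos x).ne'] at h

theorem monotoneOn_workDone_sub_freeMic (hβ : 0 < β)
    (hE : ∀ x, ContDiff ℝ 1 fun t => E t x) {W : ℝ → Matrix (Fin N) (Fin N) ℝ}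
    (hWoff : ∀ t x y, x ≠ y → 0 ≤ W t x y) (hWsum : ∀ t y, ∑ x, W t x y = 0)
    (hdb : ∀ t x y, x ≠ y →
      W t x y * exp (-β * E t y) = W t y x * exp (-β * E t x))
    (hODE : ∀ x, ∀ t ∈ Ici (0:ℝ),
      HasDerivWithinAt (fun s => p s x) ((W t *ᵥ p t) x) (Ici 0) t)
    (hppos : ∀ t ∈ Ici (0:ℝ), ∀ x, 0 < p t x) :
    MonotoneOn (fun t => workDone E p t - freeMic β E p t) (Ici 0) := by
  have hEd : ∀ x t, HasDerivAt (fun u => E u x) (deriv (fun u => E u x) t) t :=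
    fun x t => ((hE x).differentiable one_ne_zero t).hasDerivAt
  have hP : ContinuousOn (workRate E p) (Ici 0) :=
    continuousOn_finsetSum _ fun x _ => ((hE x).continuous_deriv le_rfl).continuousOn.mul
      fun t ht => (hODE x t ht).continuousWithinAt
  -- `f'` is the entropy production rate of the master equation
  refine monotoneOn_Ici_of_hasDerivWithinAt_nonneg
    (f' := fun t => -β⁻¹ * ∑ x, (W t *ᵥ p t) x * log (p t x / exp (-β * E t x)))
    (fun t ht => ?_) (fun t ht => ?_)
  · refine ((hasDerivWithinAt_workDone hP ht).fun_sub (hasDerivWithinAt_freeMic (β := β)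
      (fun x => (hEd x t).hasDerivWithinAt) (fun x => hODE x t ht) (hppos t ht))).congr_deriv ?_
    have hflux := sum_mulVec_eq_zero (hWsum t) (p t)
    have henergy : ∑ x, (W t *ᵥ p t) x * (-β * E t x) = -β * ∑ x, E t x * (W t *ᵥ p t) x := by
      rw [mul_sum]; exact sum_congr rfl fun x _ => by ring
    simp only [workRate, log_div (hppos t ht _).ne' (exp_pos _).ne', log_exp, sum_add_distrib,
      hflux, mul_sub, sum_sub_distrib, add_zero, henergy]
    field_simp
    ring
  · exact mul_nonneg_of_nonpos_of_nonpos (by simp [hβ.le]) <|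
      sum_mulVec_mul_log_div_nonpos (hWoff t) (hWsum t) (fun x => exp_pos _) (hdb t)
        (hppos t ht)

end Trajectory

theorem integrated_second_law_mesolevel_general {N M : ℕ} (c : Fin N → Fin M)
    (β : ℝ) (hβ : 0 < β)
    (E : ℝ → Fin N → ℝ) (Ebar : ℝ → Fin M → ℝ) (Etil : Fin N → ℝ)
    (hE : ∀ t x, E t x = Ebar t (c x) + Etil x)
    (hEbar : ∀ α, ContDiff ℝ 1 fun t => Ebar t α)
    (W : ℝ → Matrix (Fin N) (Fin N) ℝ)
    (hWoff : ∀ t x y, x ≠ y → 0 ≤ W t x y)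
    (hWsum : ∀ t y, ∑ x, W t x y = 0)
    (hdb : ∀ t x y, x ≠ y →
      W t x y * Real.exp (-β * E t y) = W t y x * Real.exp (-β * E t x))
    (p : ℝ → Fin N → ℝ)
    (hODE : ∀ x, ∀ t ∈ Set.Ici (0:ℝ),
      HasDerivWithinAt (fun s => p s x) ((W t *ᵥ p t) x) (Set.Ici 0) t)
    (hppos : ∀ t ∈ Set.Ici (0:ℝ), ∀ x, 0 < p t x)
    (hinit : ∀ x, p 0 x =
      lump c (p 0) (c x) * gibbs β (E 0) x / lump c (gibbs β (E 0)) (c x)) :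
    ∀ t ∈ Set.Ici (0:ℝ),
      β * (workDone E p t - freeMeso β E c p t + freeMeso β E c p 0) ≥
        β * (workDone E p t - freeMic β E p t + freeMic β E p 0) ∧
      β * (workDone E p t - freeMic β E p t + freeMic β E p 0) ≥ 0 := by
  intro t ht
  have hEc : ∀ x, ContDiff ℝ 1 fun u => E u x := fun x => by
    simpa only [hE] using (hEbar (c x)).add contDiff_const
  have hmic : 0 ≤ workDone E p t - freeMic β E p t + freeMic β E p 0 := by
    have h := monotoneOn_workDone_sub_freeMic hβ hEc hWoff hWsum hdb hODE hppos self_mem_Ici ht ht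
    have hwork₀ : workDone E p 0 = 0 := intervalIntegral.integral_same
    simp only [hwork₀] at h
    linarith
  have hmeso_le := freeMeso_le_freeMic c E p hβ (hppos t ht)
  have hmeso_eq := freeMeso_eq_freeMic_of_condEquil c E p hβ.ne' (hppos 0 self_mem_Ici)
    fun x => (hinit x).trans (condEquil_gibbs c (p 0) β (E 0) x)
  exact ⟨mul_le_mul_of_nonneg_left (by linarith) hβ.le, mul_nonneg hβ.le hmic⟩

/-- **Theorem 3.1 (integrated second law at the mesolevel dominates the microlevel one).**
For bipartite energies `E t x = Ē t (c x) + Ẽ x` with continuously differentiable driving,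
a continuous family of rate matrices `W t` obeying local detailed balance, and a strictly
positive solution `p` of the master equation started in a conditionally equilibrated state,
the mesoscopic entropy production `Σ(t) = β (W_wk(t) − ΔF(t))` dominates the microscopic
one `Σ_mic(t) = β (W_wk(t) − ΔF_mic(t))`, and both are nonnegative, for all `t ≥ 0`. -/
theorem integrated_second_law_mesolevel {N M : ℕ} (c : Fin N → Fin M)
    (β : ℝ) (hβ : 0 < β)
    (E : ℝ → Fin N → ℝ) (Ebar : ℝ → Fin M → ℝ) (Etil : Fin N → ℝ)
    (hE : ∀ t x, E t x = Ebar t (c x) + Etil x)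
    (hEbar : ∀ α, ContDiff ℝ 1 fun t => Ebar t α)
    (W : ℝ → Matrix (Fin N) (Fin N) ℝ)
    (hWcont : ∀ x y, Continuous fun t => W t x y)
    (hWoff : ∀ t x y, x ≠ y → 0 ≤ W t x y)
    (hWsum : ∀ t y, ∑ x, W t x y = 0)
    (hdb : ∀ t x y, x ≠ y →
      W t x y * Real.exp (-β * E t y) = W t y x * Real.exp (-β * E t x))
    (p : ℝ → Fin N → ℝ)
    (hODE : ∀ x, ∀ t ∈ Set.Ici (0:ℝ),
      HasDerivWithinAt (fun s => p s x) ((W t *ᵥ p t) x) (Set.Ici 0) t)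
    (hppos : ∀ t ∈ Set.Ici (0:ℝ), ∀ x, 0 < p t x)
    (hpsum : ∀ t ∈ Set.Ici (0:ℝ), ∑ x, p t x = 1)
    (hinit : ∀ x, p 0 x =
      lump c (p 0) (c x) * gibbs β (E 0) x / lump c (gibbs β (E 0)) (c x)) :
    ∀ t ∈ Set.Ici (0:ℝ),
      β * (workDone E p t - freeMeso β E c p t + freeMeso β E c p 0) ≥
        β * (workDone E p t - freeMic β E p t + freeMic β E p 0) ∧
      β * (workDone E p t - freeMic β E p t + freeMic β E p 0) ≥ 0 :=
  integrated_second_law_mesolevel_general c β hβ E Ebar Etil hE hEbar W hWoff hWsum hdb p hODE hppos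
    hinit
end

section
/- Non-Markovian speed-up of bit erasure (Section 7.2): Let γ₀₁, γ₁₀ : [0,∞) → ℝ be continuous with γ₀₁(s) ≥ 0 for all s, and let p₀(0) ∈ [0,1]. For a rate function g : [0,∞) → ℝ define the solution of the two-state master equation ṗ₀ = γ₀₁ − (γ₀₁ + g)·p₀ by p₀[t; g] = exp(−∫₀ᵗ (γ₀₁(s) + g(s)) ds) · p₀(0) + ∫₀ᵗ exp(−∫ₛᵗ (γ₀₁(u) + g(u)) du) · γ₀₁(s) ds. Then for every t ≥ 0, p₀[t; γ₁₀] ≥ p₀[t; |γ₁₀|]; i.e. allowing the rate γ₁₀ to take negative values (a signature of non-Markovianity) can only increase the probability of having erased the bit to state 0 at any finite time, compared with the Markovian dynamics using |γ₁₀|. -/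
/-- Explicit solution of the two-state (bit) master equation
`ṗ₀ = γ₀₁ − (γ₀₁ + g) p₀` with initial value `p₀(0)`:
`p₀[t; g] = exp(−∫₀ᵗ (γ₀₁ + g)) p₀(0) + ∫₀ᵗ exp(−∫ₛᵗ (γ₀₁ + g)) γ₀₁(s) ds`. -/
noncomputable def bitSol (γ01 g : ℝ → ℝ) (p00 : ℝ) (t : ℝ) : ℝ :=
  Real.exp (-∫ s in (0:ℝ)..t, (γ01 s + g s)) * p00 +
    ∫ s in (0:ℝ)..t, Real.exp (-∫ u in s..t, (γ01 u + g u)) * γ01 s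

/-! The rate `g` enters `p₀[t; g]` only through the decay factors `exp (-∫ (γ₀₁ + g))`, which
decrease as `g` increases and multiply the nonnegative quantities `p₀(0)` and `γ₀₁`. Hence
`p₀[t; g]` is antitone in `g`, and `γ₁₀ ≤ |γ₁₀|` gives the claim. -/

open Real MeasureTheory intervalIntegral

theorem continuous_intervalIntegral_lower {E : Type*} [NormedAddCommGroup E] [NormedSpace ℝ E]
    {f : ℝ → E} (hf : Continuous f) (b : ℝ) :
    Continuous fun a => ∫ u in a..b, f u := by
  simp only [integral_symm b]
  exact (continuous_primitive hf.intervalIntegrable b).neg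

theorem exp_neg_intervalIntegral_le_of_le {f g : ℝ → ℝ} {a b : ℝ} (hab : a ≤ b)
    (hf : IntervalIntegrable f volume a b) (hg : IntervalIntegrable g volume a b) (hfg : f ≤ g) :
    exp (-∫ u in a..b, g u) ≤ exp (-∫ u in a..b, f u) :=
  exp_le_exp.2 (neg_le_neg (integral_mono hab hf hg hfg))

theorem bitSol_le_of_le {γ01 g h : ℝ → ℝ} (hγ01 : Continuous γ01) (hg : Continuous g)
    (hh : Continuous h) (hγ01_nonneg : ∀ s, 0 ≤ γ01 s) (hgh : g ≤ h) {p00 t : ℝ}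
    (hp00 : 0 ≤ p00) (ht : 0 ≤ t) :
    bitSol γ01 h p00 t ≤ bitSol γ01 g p00 t := by
  have hcg : Continuous fun s => γ01 s + g s := hγ01.add hg
  have hch : Continuous fun s => γ01 s + h s := hγ01.add hh
  have decay_le : ∀ s ≤ t,
      exp (-∫ u in s..t, (γ01 u + h u)) ≤ exp (-∫ u in s..t, (γ01 u + g u)) := fun s hs =>
    exp_neg_intervalIntegral_le_of_le hs (hcg.intervalIntegrable s t)
      (hch.intervalIntegrable s t) fun u => add_le_add le_rfl (hgh u)
  have hcont : ∀ k : ℝ → ℝ, Continuous k →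
      Continuous fun s => exp (-∫ u in s..t, k u) * γ01 s := fun k hk =>
    ((continuous_intervalIntegral_lower hk t).neg.rexp).mul hγ01
  unfold bitSol
  gcongr ?_ + ?_
  · exact mul_le_mul_of_nonneg_right (decay_le 0 ht) hp00
  · exact integral_mono_on ht ((hcont _ hch).intervalIntegrable 0 t)
      ((hcont _ hcg).intervalIntegrable 0 t) fun s hs =>
        mul_le_mul_of_nonneg_right (decay_le s hs.2) (hγ01_nonneg s)

/-- **Non-Markovian speed-up of bit erasure** (Section 7.2 of the paper).
For continuous rates `γ₀₁ ≥ 0` and `γ₁₀` (possibly negative, a signature of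
non-Markovianity) and any initial occupation `p₀(0) ∈ [0,1]`, the probability of having
erased the bit to state `0` at any finite time `t ≥ 0` under the rate `γ₁₀` is at least
as large as under the Markovian dynamics with rate `|γ₁₀|`:
`p₀[t; γ₁₀] ≥ p₀[t; |γ₁₀|]`. -/
theorem nonMarkovian_speedup_erasure (γ01 γ10 : ℝ → ℝ)
    (hcont01 : Continuous γ01) (hcont10 : Continuous γ10)
    (h01 : ∀ s, 0 ≤ γ01 s)
    (p00 : ℝ) (hp00 : p00 ∈ Set.Icc (0:ℝ) 1) :
    ∀ t : ℝ, 0 ≤ t →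
      bitSol γ01 (fun s => |γ10 s|) p00 t ≤ bitSol γ01 γ10 p00 t := fun _ ht =>
  bitSol_le_of_le hcont01 hcont10 hcont10.abs h01 (fun s => le_abs_self (γ10 s)) hp00.1 ht
end
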